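/- Let (W, G) be a Riemannian manifold with two parallel anticommuting almost complex structures J, K compatible with G, and let Z : ℝ³ ⊇ U → W be smooth satisfying ∂_s Z + J(Z)∂_x Z + K(Z)∂_y Z = V(Z) for a smooth vector field V on W. Then the tension field τ(Z) = ∇_s Z_s + ∇_x Z_x + ∇_y Z_y satisfies τ(Z) = ∇_s(V∘Z) − J(Z)∇_x(V∘Z) − K(Z)∇_y(V∘Z), where ∇ denotes the pullback of the Levi–Civita connection. -/
import Mathlib


open RealInnerProductSpace

/-- Abstract formalization of the tension-field identity for Fueter/Floer trajectories
(Lemma 7.2). `U` plays the role of the domain `U ⊆ ℝ³` with coordinates `s, x, y`;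
`E` is the typical fiber of `Z^*TW`; `J u`, `K u` are the (parallel, anticommuting,
metric-compatible) complex structures at the point `Z(u)`; `Ds, Dx, Dy` are the
pullback covariant derivative operators on vector fields along `Z`; `Zs, Zx, Zy` are
the partial derivatives of `Z` and `VZ = V ∘ Z`. Parallelism of `J, K` is expressed by
the commutation of the derivative operators with the pointwise action of `J, K`, and
torsion-freeness by the symmetry relations `Ds Zx = Dx Zs`, etc. -/
theorem stmt_14 {U E : Type*} [NormedAddCommGroup E] [InnerProductSpace ℝ E]
    (J K : U → E →ₗ[ℝ] E)
    -- compatibility with the metric G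
    (hJG : ∀ (u : U) (x y : E), ⟪J u x, J u y⟫ = ⟪x, y⟫)
    (hKG : ∀ (u : U) (x y : E), ⟪K u x, K u y⟫ = ⟪x, y⟫)
    -- almost complex structures
    (hJ2 : ∀ (u : U) (x : E), J u (J u x) = -x)
    (hK2 : ∀ (u : U) (x : E), K u (K u x) = -x)
    -- anticommutation JK = -KJ
    (hanti : ∀ (u : U) (x : E), J u (K u x) = -K u (J u x))
    -- pullback covariant derivatives
    (Ds Dx Dy : (U → E) →ₗ[ℝ] (U → E))
    -- ∇J = ∇K = 0
    (hDsJ : ∀ f : U → E, Ds (fun u => J u (f u)) = fun u => J u (Ds f u))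
    (hDxJ : ∀ f : U → E, Dx (fun u => J u (f u)) = fun u => J u (Dx f u))
    (hDyJ : ∀ f : U → E, Dy (fun u => J u (f u)) = fun u => J u (Dy f u))
    (hDsK : ∀ f : U → E, Ds (fun u => K u (f u)) = fun u => K u (Ds f u))
    (hDxK : ∀ f : U → E, Dx (fun u => K u (f u)) = fun u => K u (Dx f u))
    (hDyK : ∀ f : U → E, Dy (fun u => K u (f u)) = fun u => K u (Dy f u))
    (Zs Zx Zy VZ : U → E)
    -- symmetry of the pullback connection (torsion-freeness)
    (hsym1 : Ds Zx = Dx Zs) (hsym2 : Ds Zy = Dy Zs) (hsym3 : Dx Zy = Dy Zx)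
    -- the Fueter/Floer equation ∂_s Z + J(Z)∂_x Z + K(Z)∂_y Z = V(Z)
    (hFueter : ∀ u : U, Zs u + J u (Zx u) + K u (Zy u) = VZ u) :
    ∀ u : U, Ds Zs u + Dx Zx u + Dy Zy u =
      Ds VZ u - J u (Dx VZ u) - K u (Dy VZ u) := by
  have hVZ : VZ = Zs + (fun u => J u (Zx u)) + (fun u => K u (Zy u)) := by
    funext u; exact (hFueter u).symm
  have hDsV : ∀ u, Ds VZ u = Ds Zs u + J u (Ds Zx u) + K u (Ds Zy u) := by
    intro u
    rw [hVZ, map_add, map_add, hDsJ, hDsK]; rfl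
  have hDxV : ∀ u, Dx VZ u = Dx Zs u + J u (Dx Zx u) + K u (Dx Zy u) := by
    intro u
    rw [hVZ, map_add, map_add, hDxJ, hDxK]; rfl
  have hDyV : ∀ u, Dy VZ u = Dy Zs u + J u (Dy Zx u) + K u (Dy Zy u) := by
    intro u
    rw [hVZ, map_add, map_add, hDyJ, hDyK]; rfl
  intro u
  rw [hDsV, hDxV, hDyV, map_add, map_add, map_add, map_add,
    hJ2, hK2, hsym3, hanti u (Dy Zx u), ← hsym1, ← hsym2]
  abel
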